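/- Let n ≥ 3, let λ be symmetric nonnegative real edge weights on the complete graph with vertex set {1,…,n}, and set B = max over j ∈ {1,…,n} and over subsets A ⊆ {1,…,n}\{j} with |A| = n − 2 of Σ_{k∈A} λ_{jk}. If z is a complex number such that μ(z, z, …, z) = 0 (the matching polynomial with all vertex variables equal to z vanishes), then Re(z) = 0 and |z| ≤ 2√B. That is, every complex root of the univariate matching polynomial μ(z,…,z) is purely imaginary of modulus at most 2√B. -/

import Mathlib

open Finset Classical

/-- A matching of the complete graph induced on the vertex set `S ⊆ Fin n`,
represented as a finset of ordered pairs `(j, k)` with `j < k` (each such pair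
encoding the unordered edge `{j, k}`), no two of which share a vertex. -/
def IsMatching (n : ℕ) (S : Finset (Fin n)) (M : Finset (Fin n × Fin n)) : Prop :=
  (∀ p ∈ M, p.1 < p.2 ∧ p.1 ∈ S ∧ p.2 ∈ S) ∧
  ∀ p ∈ M, ∀ q ∈ M, p ≠ q → p.1 ≠ q.1 ∧ p.1 ≠ q.2 ∧ p.2 ≠ q.1 ∧ p.2 ≠ q.2

/-- The matching polynomial of the complete graph induced on `S ⊆ Fin n`, with
edge weights `lam` and vertex variables `x`:
`μ_S = Σ_{M matching of S} (Π_{i ∈ S not covered by M} x i) · (Π_{{j,k} ∈ M} lam j k)`. -/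
noncomputable def mu (n : ℕ) (lam : Fin n → Fin n → ℝ) (x : Fin n → ℂ)
    (S : Finset (Fin n)) : ℂ :=
  ∑ M ∈ univ.filter (fun M : Finset (Fin n × Fin n) => IsMatching n S M),
    (∏ v ∈ S.filter (fun v => ∀ p ∈ M, v ≠ p.1 ∧ v ≠ p.2), x v) *
    ∏ p ∈ M, (lam p.1 p.2 : ℂ)

/-!
Everything follows from the vertex-deletion recurrence
`μ_S = z μ_{S∖j} + Σ_{k ∈ S∖j} λ_{jk} μ_{S∖{j,k}}` (all vertex variables equal to `z`).

Real part: by induction on `S`, `Re z · Re (μ_S · conj μ_{S∖j}) ≥ (Re z)² |μ_{S∖j}|²`, because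
every cross term `Re (μ_{S∖{j,k}} · conj μ_{S∖j})` has, by the induction hypothesis at `S∖j`, the
sign of `Re z`. Hence `μ_S ≠ 0` as soon as `Re z ≠ 0`.

Modulus: if `|z|² > 4B`, then `|z| |μ_{S∖j}| < 2 |μ_S|` for all `|S| ≤ n - 1`, since the weights
from `j` to at most `n - 2` vertices sum to at most `B`. On the full vertex set the weights from
`j` sum to at most `2B`, and the same estimate gives `|z| |μ| ≥ (|z|² - 4B) |μ_{S∖j}| > 0`.
-/

namespace MatchingPolynomial

open ComplexConjugate

theorem re_mul_conj_comm (a b : ℂ) : (a * conj b).re = (b * conj a).re := by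
  simp only [Complex.mul_re, Complex.conj_re, Complex.conj_im]
  ring

section Recurrence

variable {α : Type*} [DecidableEq α]

structure MatchingRecurrence (w : α → α → ℝ) (z : ℂ) (f : Finset α → ℂ) : Prop where
  empty : f ∅ = 1
  erase : ∀ S, ∀ j ∈ S,
    f S = z * f (S.erase j) + ∑ k ∈ S.erase j, (w j k : ℂ) * f ((S.erase j).erase k)

theorem sum_le_two_mul {w : α → α → ℝ} {m : ℕ} {B : ℝ}
    (hB : ∀ j (A : Finset α), j ∉ A → A.card ≤ m → ∑ k ∈ A, w j k ≤ B) (hm : 1 ≤ m)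
    {j : α} {A : Finset α} (hj : j ∉ A) (hA : A.card ≤ m + 1) :
    ∑ k ∈ A, w j k ≤ 2 * B := by
  obtain rfl | ⟨k, hk⟩ := A.eq_empty_or_nonempty
  · simpa using hB j ∅ (notMem_empty j) (Nat.zero_le m)
  rw [← add_sum_erase A _ hk, two_mul]
  refine add_le_add ?_ (hB j _ (fun h => hj (mem_of_mem_erase h)) ?_)
  · simpa using hB j {k} (fun h => hj (mem_singleton.1 h ▸ hk)) (by simpa using hm)
  · rw [card_erase_of_mem hk]; omega

variable {w : α → α → ℝ} {z : ℂ} {f : Finset α → ℂ}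

namespace MatchingRecurrence

theorem sq_re_mul_normSq_le (hf : MatchingRecurrence w z f) (hw : ∀ j k, 0 ≤ w j k)
    (S : Finset α) :
    ∀ j ∈ S, z.re ^ 2 * Complex.normSq (f (S.erase j)) ≤ z.re * (f S * conj (f (S.erase j))).re := by
  induction S using Finset.strongInduction with
  | H S ih =>
  intro j hj
  set T := S.erase j
  have hcross : ∀ k ∈ T, 0 ≤ z.re * (w j k * (f (T.erase k) * conj (f T)).re) := by
    intro k hk
    have := ih T (erase_ssubset hj) k hk
    rw [re_mul_conj_comm, mul_left_comm]
    exact mul_nonneg (hw j k) ((mul_nonneg (sq_nonneg _) (Complex.normSq_nonneg _)).trans this)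
  have hexpand : (f S * conj (f T)).re
      = z.re * Complex.normSq (f T) + ∑ k ∈ T, w j k * (f (T.erase k) * conj (f T)).re := by
    rw [hf.erase S j hj, add_mul, sum_mul, mul_assoc, Complex.mul_conj, Complex.add_re,
      Complex.re_sum, Complex.re_mul_ofReal]
    simp only [mul_assoc, Complex.re_ofReal_mul]
    rfl
  rw [hexpand, mul_add, mul_sum, ← mul_assoc, ← sq]
  linarith [sum_nonneg hcross]

theorem ne_zero_of_re_ne_zero (hf : MatchingRecurrence w z f) (hw : ∀ j k, 0 ≤ w j k)
    (hz : z.re ≠ 0) (S : Finset α) : f S ≠ 0 := by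
  induction S using Finset.strongInduction with
  | H S ih =>
  obtain rfl | ⟨j, hj⟩ := S.eq_empty_or_nonempty
  · simp [hf.empty]
  intro hS
  have hle := hf.sq_re_mul_normSq_le hw S j hj
  have hpos : 0 < z.re ^ 2 * Complex.normSq (f (S.erase j)) :=
    mul_pos (by positivity) (Complex.normSq_pos.2 (ih _ (erase_ssubset hj)))
  rw [hS, zero_mul, Complex.zero_re, mul_zero] at hle
  linarith

theorem sub_mul_norm_erase_le (hf : MatchingRecurrence w z f) (hw : ∀ j k, 0 ≤ w j k)
    {S : Finset α} {j : α} (hj : j ∈ S) {C : ℝ} (hC : ∑ k ∈ S.erase j, w j k ≤ C)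
    (hT : ∀ k ∈ S.erase j, ‖z‖ * ‖f ((S.erase j).erase k)‖ ≤ 2 * ‖f (S.erase j)‖) :
    (‖z‖ ^ 2 - 2 * C) * ‖f (S.erase j)‖ ≤ ‖z‖ * ‖f S‖ := by
  set T := S.erase j
  set R := ∑ k ∈ T, (w j k : ℂ) * f (T.erase k)
  have hR : ‖z‖ * ‖R‖ ≤ 2 * C * ‖f T‖ := calc
    ‖z‖ * ‖R‖ ≤ ‖z‖ * ∑ k ∈ T, w j k * ‖f (T.erase k)‖ := by
      gcongr
      refine (norm_sum_le _ _).trans_eq (sum_congr rfl fun k _ => ?_)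
      rw [norm_mul, Complex.norm_of_nonneg (hw j k)]
    _ = ∑ k ∈ T, w j k * (‖z‖ * ‖f (T.erase k)‖) := by
      rw [mul_sum]; exact sum_congr rfl fun k _ => by ring
    _ ≤ ∑ k ∈ T, w j k * (2 * ‖f T‖) :=
      sum_le_sum fun k hk => mul_le_mul_of_nonneg_left (hT k hk) (hw j k)
    _ = (∑ k ∈ T, w j k) * (2 * ‖f T‖) := by rw [sum_mul]
    _ ≤ C * (2 * ‖f T‖) := by gcongr
    _ = 2 * C * ‖f T‖ := by ring
  have htri : ‖z‖ * ‖f T‖ ≤ ‖f S‖ + ‖R‖ := by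
    rw [← norm_mul, show z * f T = f S - R by rw [hf.erase S j hj]; ring]
    exact norm_sub_le _ _
  nlinarith [norm_nonneg z]

theorem ne_zero_and_norm_mul_lt (hf : MatchingRecurrence w z f) (hw : ∀ j k, 0 ≤ w j k)
    {m : ℕ} {B : ℝ} (hB : ∀ j (A : Finset α), j ∉ A → A.card ≤ m → ∑ k ∈ A, w j k ≤ B)
    (hz : 4 * B < ‖z‖ ^ 2) (S : Finset α) (hS : S.card ≤ m + 1) :
    f S ≠ 0 ∧ ∀ j ∈ S, ‖z‖ * ‖f (S.erase j)‖ < 2 * ‖f S‖ := by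
  induction S using Finset.strongInduction with
  | H S ih =>
  have hstep : ∀ j ∈ S, ‖z‖ * ‖f (S.erase j)‖ < 2 * ‖f S‖ := by
    intro j hj
    have hcard : (S.erase j).card ≤ m := by rw [card_erase_of_mem hj]; omega
    obtain ⟨hT0, hT⟩ := ih _ (erase_ssubset hj) (hcard.trans m.le_succ)
    have hge := hf.sub_mul_norm_erase_le hw hj (hB j _ (notMem_erase j S) hcard)
      fun k hk => (hT k hk).le
    have hB0 : 0 ≤ B := by simpa using hB j ∅ (notMem_empty j) (Nat.zero_le m)
    have hTpos : 0 < ‖f (S.erase j)‖ := norm_pos_iff.2 hT0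
    have hzpos : 0 < ‖z‖ := by nlinarith [norm_nonneg z]
    nlinarith
  refine ⟨fun hS0 => ?_, hstep⟩
  obtain rfl | ⟨j, hj⟩ := S.eq_empty_or_nonempty
  · simp [hf.empty] at hS0
  · have := hstep j hj
    rw [hS0, norm_zero, mul_zero] at this
    exact (mul_nonneg (norm_nonneg z) (norm_nonneg _)).not_gt this

theorem ne_zero_of_four_mul_lt (hf : MatchingRecurrence w z f) (hw : ∀ j k, 0 ≤ w j k)
    {m : ℕ} {B : ℝ} (hB : ∀ j (A : Finset α), j ∉ A → A.card ≤ m → ∑ k ∈ A, w j k ≤ B)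
    (hm : 1 ≤ m) (hz : 4 * B < ‖z‖ ^ 2) (S : Finset α) (hS : S.card ≤ m + 2) : f S ≠ 0 := by
  obtain rfl | ⟨j, hj⟩ := S.eq_empty_or_nonempty
  · simp [hf.empty]
  have hcard : (S.erase j).card ≤ m + 1 := by rw [card_erase_of_mem hj]; omega
  obtain ⟨hT0, hT⟩ := hf.ne_zero_and_norm_mul_lt hw hB hz _ hcard
  have hge := hf.sub_mul_norm_erase_le hw hj (sum_le_two_mul hB hm (notMem_erase j S) hcard)
    fun k hk => (hT k hk).le
  have hTpos : 0 < ‖f (S.erase j)‖ := norm_pos_iff.2 hT0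
  intro hS0
  rw [hS0, norm_zero, mul_zero] at hge
  nlinarith

end MatchingRecurrence
end Recurrence

section Matchings

variable {n : ℕ}

def edge (j k : Fin n) : Fin n × Fin n := (min j k, max j k)

theorem edge_fst_lt_snd {j k : Fin n} (h : j ≠ k) : (edge j k).1 < (edge j k).2 :=
  min_lt_max.2 h

theorem edge_eq_or_eq (j k : Fin n) : edge j k = (j, k) ∨ edge j k = (k, j) := by
  rcases le_total j k with h | h <;> simp [edge, h]

theorem lam_edge (lam : Fin n → Fin n → ℝ) (hsymm : ∀ j k, lam j k = lam k j) (j k : Fin n) :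
    lam (edge j k).1 (edge j k).2 = lam j k := by
  rcases le_total j k with h | h <;> simp [edge, h, hsymm j k]

theorem isMatching_erase_iff {S : Finset (Fin n)} {M : Finset (Fin n × Fin n)} {j : Fin n} :
    IsMatching n (S.erase j) M ↔ IsMatching n S M ∧ ∀ p ∈ M, j ≠ p.1 ∧ j ≠ p.2 := by
  simp only [IsMatching, mem_erase]
  grind

theorem exists_edge_mem {S : Finset (Fin n)} {M : Finset (Fin n × Fin n)} {j : Fin n}
    (hM : IsMatching n S M) (hj : ¬ ∀ p ∈ M, j ≠ p.1 ∧ j ≠ p.2) :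
    ∃ k ∈ S.erase j, edge j k ∈ M := by
  push Not at hj
  obtain ⟨p, hp, hjp⟩ := hj
  obtain ⟨hlt, h1, h2⟩ := hM.1 p hp
  by_cases hj1 : j = p.1
  · subst hj1
    refine ⟨p.2, mem_erase.2 ⟨hlt.ne', h2⟩, ?_⟩
    simpa [edge, hlt.le] using hp
  · obtain rfl := hjp hj1
    refine ⟨p.1, mem_erase.2 ⟨hlt.ne, h1⟩, ?_⟩
    simpa [edge, hlt.le] using hp

theorem eq_of_edge_mem {S : Finset (Fin n)} {M : Finset (Fin n × Fin n)} {j k k' : Fin n}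
    (hM : IsMatching n S M) (hk : edge j k ∈ M) (hk' : edge j k' ∈ M) : k = k' := by
  have hjk := (hM.1 _ hk).1
  have hjk' := (hM.1 _ hk').1
  by_contra hne
  have := hM.2 _ hk _ hk' (by grind [edge])
  grind [edge]

theorem isMatching_insert_edge {S : Finset (Fin n)} {M : Finset (Fin n × Fin n)} {j k : Fin n}
    (hj : j ∈ S) (hk : k ∈ S.erase j) (hM : IsMatching n ((S.erase j).erase k) M) :
    IsMatching n S (insert (edge j k) M) := by
  have hjk : j ≠ k := (ne_of_mem_erase hk).symm
  have hlt := edge_fst_lt_snd hjk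
  obtain ⟨h1, h2⟩ := hM
  simp only [mem_erase] at h1 hk
  simp only [IsMatching, forall_mem_insert]
  obtain he | he := edge_eq_or_eq j k <;> rw [he] at hlt ⊢ <;> grind

theorem isMatching_erase_edge {S : Finset (Fin n)} {M : Finset (Fin n × Fin n)} {j k : Fin n}
    (hM : IsMatching n S M) (he : edge j k ∈ M) :
    IsMatching n ((S.erase j).erase k) (M.erase (edge j k)) := by
  obtain ⟨h1, h2⟩ := hM
  refine ⟨fun p hp => ?_, fun p hp q hq => h2 p (mem_of_mem_erase hp) q (mem_of_mem_erase hq)⟩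
  obtain ⟨hpe, hp⟩ := mem_erase.1 hp
  have := h2 p hp _ he hpe
  simp only [mem_erase]
  obtain he | he := edge_eq_or_eq j k <;> rw [he] at this <;> grind

theorem filter_avoiding_insert_edge {S : Finset (Fin n)} {M : Finset (Fin n × Fin n)} {j k : Fin n} :
    S.filter (fun v => ∀ p ∈ insert (edge j k) M, v ≠ p.1 ∧ v ≠ p.2)
      = ((S.erase j).erase k).filter (fun v => ∀ p ∈ M, v ≠ p.1 ∧ v ≠ p.2) := by
  ext v
  simp only [mem_filter, forall_mem_insert, mem_erase]
  obtain he | he := edge_eq_or_eq j k <;> rw [he] <;> grind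

variable (lam : Fin n → Fin n → ℝ) (x : Fin n → ℂ)

theorem sum_isMatching_avoiding {S : Finset (Fin n)} {j : Fin n} (hj : j ∈ S) :
    ∑ M ∈ (univ.filter (IsMatching n S)).filter (fun M => ∀ p ∈ M, j ≠ p.1 ∧ j ≠ p.2),
      (∏ v ∈ S.filter (fun v => ∀ p ∈ M, v ≠ p.1 ∧ v ≠ p.2), x v) * ∏ p ∈ M, (lam p.1 p.2 : ℂ)
      = x j * mu n lam x (S.erase j) := by
  have hfilter : (univ.filter (IsMatching n S)).filter (fun M => ∀ p ∈ M, j ≠ p.1 ∧ j ≠ p.2)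
      = univ.filter (IsMatching n (S.erase j)) := by
    ext M
    simp [isMatching_erase_iff]
  rw [hfilter, mu, mul_sum]
  refine sum_congr rfl fun M hM => ?_
  have hjM := (isMatching_erase_iff.1 (mem_filter.1 hM).2).2
  conv_lhs => rw [← insert_erase hj]
  rw [filter_insert, if_pos hjM, prod_insert (by simp), mul_assoc]

theorem sum_isMatching_edge_mem (hsymm : ∀ j k, lam j k = lam k j) {S : Finset (Fin n)}
    {j k : Fin n} (hj : j ∈ S) (hk : k ∈ S.erase j) :
    ∑ M ∈ univ.filter (fun M => IsMatching n S M ∧ edge j k ∈ M),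
      (∏ v ∈ S.filter (fun v => ∀ p ∈ M, v ≠ p.1 ∧ v ≠ p.2), x v) * ∏ p ∈ M, (lam p.1 p.2 : ℂ)
      = lam j k * mu n lam x ((S.erase j).erase k) := by
  have hnotMem : ∀ {M}, IsMatching n ((S.erase j).erase k) M → edge j k ∉ M := by
    intro M hM he
    have := (hM.1 _ he).2.1
    obtain he | he := edge_eq_or_eq j k <;> rw [he] at this <;> simp at this
  rw [mu, mul_sum]
  refine (sum_nbij' (insert (edge j k)) (fun M => M.erase (edge j k)) ?_ ?_ ?_ ?_ ?_).symm
  · intro M hM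
    simp only [mem_filter, mem_univ, true_and] at hM ⊢
    exact ⟨isMatching_insert_edge hj hk hM, mem_insert_self _ _⟩
  · intro M hM
    simp only [mem_filter, mem_univ, true_and] at hM ⊢
    exact isMatching_erase_edge hM.1 hM.2
  · intro M hM
    simp only [mem_filter, mem_univ, true_and] at hM
    exact erase_insert (hnotMem hM)
  · intro M hM
    simp only [mem_filter, mem_univ, true_and] at hM
    exact insert_erase hM.2
  · intro M hM
    simp only [mem_filter, mem_univ, true_and] at hM
    rw [filter_avoiding_insert_edge, prod_insert (hnotMem hM), lam_edge lam hsymm]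
    ring

theorem filter_isMatching_not_avoiding_eq_biUnion (S : Finset (Fin n)) (j : Fin n) :
    (univ.filter (IsMatching n S)).filter (fun M => ¬ ∀ p ∈ M, j ≠ p.1 ∧ j ≠ p.2)
      = (S.erase j).biUnion fun k => univ.filter fun M => IsMatching n S M ∧ edge j k ∈ M := by
  ext M
  simp only [mem_filter, mem_univ, true_and, mem_biUnion]
  constructor
  · rintro ⟨hM, hj⟩
    obtain ⟨k, hk, he⟩ := exists_edge_mem hM hj
    exact ⟨k, hk, hM, he⟩
  · rintro ⟨k, -, hM, he⟩
    refine ⟨hM, fun h => ?_⟩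
    have := h _ he
    obtain he | he := edge_eq_or_eq j k <;> simp [he] at this

theorem mu_erase (hsymm : ∀ j k, lam j k = lam k j) {S : Finset (Fin n)} {j : Fin n}
    (hj : j ∈ S) :
    mu n lam x S = x j * mu n lam x (S.erase j)
      + ∑ k ∈ S.erase j, (lam j k : ℂ) * mu n lam x ((S.erase j).erase k) := by
  have hdisj : (S.erase j : Set (Fin n)).PairwiseDisjoint
      fun k => univ.filter fun M => IsMatching n S M ∧ edge j k ∈ M := by
    intro k _ k' _ hkk'
    simp only [Function.onFun, disjoint_left, mem_filter, mem_univ, true_and]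
    exact fun M hM hM' => hkk' (eq_of_edge_mem hM.1 hM.2 hM'.2)
  rw [mu, ← sum_filter_add_sum_filter_not _ (fun M => ∀ p ∈ M, j ≠ p.1 ∧ j ≠ p.2),
    sum_isMatching_avoiding lam x hj, filter_isMatching_not_avoiding_eq_biUnion, sum_biUnion hdisj]
  congr 1
  exact sum_congr rfl fun k hk => sum_isMatching_edge_mem lam x hsymm hj hk

theorem mu_empty : mu n lam x ∅ = 1 := by
  have h : univ.filter (IsMatching n ∅) = {∅} := by
    ext M
    simp +contextual [IsMatching, eq_empty_iff_forall_notMem]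
  simp [mu, h]

theorem matchingRecurrence_mu (lam : Fin n → Fin n → ℝ) (hsymm : ∀ j k, lam j k = lam k j)
    (z : ℂ) : MatchingRecurrence lam z (mu n lam fun _ => z) :=
  ⟨mu_empty lam _, fun _ _ hj => mu_erase lam _ hsymm hj⟩

theorem sum_le_of_isGreatest {lam : Fin n → Fin n → ℝ} (hnonneg : ∀ j k, 0 ≤ lam j k) {B : ℝ}
    (hB : IsGreatest {s : ℝ | ∃ j : Fin n, ∃ A : Finset (Fin n),
        A ⊆ Finset.univ \ {j} ∧ A.card = n - 2 ∧ s = ∑ k ∈ A, lam j k} B)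
    (j : Fin n) (A : Finset (Fin n)) (hj : j ∉ A) (hA : A.card ≤ n - 2) :
    ∑ k ∈ A, lam j k ≤ B := by
  have hsub : A ⊆ univ \ {j} := fun k hk =>
    mem_sdiff.2 ⟨mem_univ k, fun h => hj (mem_singleton.1 h ▸ hk)⟩
  have hcard : n - 2 ≤ (univ \ {j} : Finset (Fin n)).card := by
    rw [sdiff_singleton_eq_erase, card_erase_of_mem (mem_univ j), card_univ, Fintype.card_fin]
    omega
  obtain ⟨A', hAA', hA', hcard'⟩ := exists_subsuperset_card_eq hsub hA hcard
  calc ∑ k ∈ A, lam j k ≤ ∑ k ∈ A', lam j k :=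
        sum_le_sum_of_subset_of_nonneg hAA' fun k _ _ => hnonneg j k
    _ ≤ B := hB.2 ⟨j, A', hA', hcard', rfl⟩

end Matchings

end MatchingPolynomial

open MatchingPolynomial

theorem matching_roots_imaginary_general (n : ℕ) (hn : 3 ≤ n)
    (lam : Fin n → Fin n → ℝ)
    (hsymm : ∀ j k, lam j k = lam k j)
    (hnonneg : ∀ j k, 0 ≤ lam j k)
    (B : ℝ)
    (hB : IsGreatest {s : ℝ | ∃ j : Fin n, ∃ A : Finset (Fin n),
        A ⊆ Finset.univ \ {j} ∧ A.card = n - 2 ∧ s = ∑ k ∈ A, lam j k} B)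
    (z : ℂ) (hz : mu n lam (fun _ => z) Finset.univ = 0) :
    z.re = 0 ∧ ‖z‖ ≤ 2 * Real.sqrt B := by
  have hmu := matchingRecurrence_mu lam hsymm z
  have hrow := sum_le_of_isGreatest hnonneg hB
  refine ⟨?_, ?_⟩
  · by_contra hre
    exact hmu.ne_zero_of_re_ne_zero hnonneg hre univ hz
  · by_contra! hlt
    have hz4 : 4 * B < ‖z‖ ^ 2 := by
      have hz0 : 0 < ‖z‖ / 2 := by linarith [Real.sqrt_nonneg B]
      have := (Real.sqrt_lt' hz0).1 (show √B < ‖z‖ / 2 by linarith)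
      linarith
    exact hmu.ne_zero_of_four_mul_lt hnonneg hrow (by omega) hz4 univ (by simp; omega) hz

/-- **Location of the roots of the univariate matching polynomial.** For `n ≥ 3`,
with `B` the Heilmann–Lieb bound `max_j max_{A ⊆ {1,…,n}∖{j}, |A| = n−2} Σ_{k∈A} lam j k`,
every complex root `z` of `μ(z,…,z)` is purely imaginary with `|z| ≤ 2√B`. -/
theorem matching_roots_imaginary (n : ℕ) (hn : 3 ≤ n)
    (lam : Fin n → Fin n → ℝ)
    (hsymm : ∀ j k, lam j k = lam k j)
    (hnonneg : ∀ j k, 0 ≤ lam j k)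
    (hdiag : ∀ j, lam j j = 0)
    (B : ℝ)
    (hB : IsGreatest {s : ℝ | ∃ j : Fin n, ∃ A : Finset (Fin n),
        A ⊆ Finset.univ \ {j} ∧ A.card = n - 2 ∧ s = ∑ k ∈ A, lam j k} B)
    (z : ℂ) (hz : mu n lam (fun _ => z) Finset.univ = 0) :
    z.re = 0 ∧ ‖z‖ ≤ 2 * Real.sqrt B :=
  matching_roots_imaginary_general n hn lam hsymm hnonneg B hB z hz
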